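/- arXiv:2504.21601 — 2 statements merged into one kernel-verified Lean document; each statement's English description precedes it below -/
import Mathlib

section
/- Let α be a d-face in the clique complex of a graph G. Then the number of neighbouring d-faces of α satisfies |N_α| = Σ_{γ ∈ ∂α} |π_γ| − (d+1). -/
variable {V : Type*} [DecidableEq V]

/-- `α₁` and `α₂` (both `d`-faces) share a common `(d-1)`-face. -/
def SharesBoundaryFace (d : ℕ) (α₁ α₂ : Finset V) : Prop :=
  ∃ γ : Finset V, γ.card = d ∧ γ ⊆ α₁ ∧ γ ⊆ α₂

/-- `α₁` and `α₂` are both contained in a common `(d+1)`-face of the clique complex. -/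
def SharesCoface (G : SimpleGraph V) (d : ℕ) (α₁ α₂ : Finset V) : Prop :=
  ∃ β : Finset V, G.IsNClique (d + 2) β ∧ α₁ ⊆ β ∧ α₂ ⊆ β

/-- `α₂` is a neighbour of the `d`-face `α₁`. -/
def IsNeighbour (G : SimpleGraph V) (d : ℕ) (α₁ α₂ : Finset V) : Prop :=
  α₁ ≠ α₂ ∧ (SharesBoundaryFace d α₁ α₂ ∨ SharesCoface G d α₁ α₂)

/-- `α₂` is a parallel neighbour of the `d`-face `α₁`. -/
def IsParallelNeighbour (G : SimpleGraph V) (d : ℕ) (α₁ α₂ : Finset V) : Prop :=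
  α₁ ≠ α₂ ∧ SharesBoundaryFace d α₁ α₂ ∧ ¬ SharesCoface G d α₁ α₂

/-- `α₂` is a transverse neighbour of the `d`-face `α₁`. -/
def IsTransverseNeighbour (G : SimpleGraph V) (d : ℕ) (α₁ α₂ : Finset V) : Prop :=
  α₁ ≠ α₂ ∧ SharesBoundaryFace d α₁ α₂ ∧ SharesCoface G d α₁ α₂

/-- The set `N_α` of neighbouring `d`-faces of `α` in the clique complex of `G`. -/
def neighbourSet (G : SimpleGraph V) (d : ℕ) (α : Finset V) : Set (Finset V) :=
  {α' : Finset V | G.IsNClique (d + 1) α' ∧ IsNeighbour G d α α'}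

/-- The set `P_α` of parallel neighbours of `α`. -/
def parallelSet (G : SimpleGraph V) (d : ℕ) (α : Finset V) : Set (Finset V) :=
  {α' : Finset V | G.IsNClique (d + 1) α' ∧ IsParallelNeighbour G d α α'}

/-- The set `T_α` of transverse neighbours of `α`. -/
def transverseSet (G : SimpleGraph V) (d : ℕ) (α : Finset V) : Set (Finset V) :=
  {α' : Finset V | G.IsNClique (d + 1) α' ∧ IsTransverseNeighbour G d α α'}

/-- The set `H_α` of `(d+1)`-faces containing the `d`-face `α` in their boundary. -/
def cofaceSet (G : SimpleGraph V) (d : ℕ) (α : Finset V) : Set (Finset V) :=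
  {β : Finset V | G.IsNClique (d + 2) β ∧ α ⊆ β}

/-- The common graph-neighbourhood `π_γ` of a set of vertices `γ`. -/
def piSet (G : SimpleGraph V) (γ : Finset V) : Set V :=
  {x : V | ∀ v ∈ γ, G.Adj v x}

/-!
Every neighbour `α'` of a `d`-face `α` meets `α` in a `(d-1)`-face `γ` (if `α, α'` lie in a common
`(d+1)`-face, they share `d` vertices), so `α' = γ ∪ {x}` with `x ∈ π_γ \ α`. The faces produced
by different `γ` are distinct because `γ = α' ∩ α`, and `π_γ ∩ α` is the single vertex of `α \ γ`.
-/

open Finset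

section Neighbours

variable {G : SimpleGraph V} {d : ℕ} {α α' γ : Finset V}

lemma sharesBoundaryFace_of_sharesCoface (hα : #α = d + 1) (hα' : #α' = d + 1)
    (h : SharesCoface G d α α') : SharesBoundaryFace d α α' := by
  obtain ⟨β, hβ, hαβ, hα'β⟩ := h
  have hunion : #(α ∪ α') ≤ d + 2 := hβ.card_eq ▸ card_le_card (union_subset hαβ hα'β)
  have hinter : d ≤ #(α ∩ α') := by
    have := card_union_add_card_inter α α'
    omega
  obtain ⟨γ, hγ, hγcard⟩ := exists_subset_card_eq hinter
  exact ⟨γ, hγcard, hγ.trans inter_subset_left, hγ.trans inter_subset_right⟩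

lemma mem_neighbourSet_iff (hα : G.IsNClique (d + 1) α) :
    α' ∈ neighbourSet G d α ↔
      ∃ γ ∈ powersetCard d α, ∃ x ∈ piSet G γ \ ↑α, insert x γ = α' := by
  constructor
  · rintro ⟨hα', hne, hshare⟩
    obtain ⟨γ, hγcard, hγα, hγα'⟩ :=
      hshare.elim id (sharesBoundaryFace_of_sharesCoface hα.card_eq hα'.card_eq)
    obtain ⟨x, hxγ, rfl⟩ := exists_eq_insert_iff.mpr ⟨hγα', by rw [hγcard, hα'.card_eq]⟩
    have hxα : x ∉ α := fun hx =>
      hne (eq_of_subset_of_card_le (insert_subset hx hγα) (by rw [hα.card_eq, hα'.card_eq])).symm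
    have hxπ : x ∈ piSet G γ := fun v hv =>
      hα'.isClique (mem_insert_of_mem hv) (mem_insert_self x γ) (ne_of_mem_of_not_mem hv hxγ)
    exact ⟨γ, mem_powersetCard.mpr ⟨hγα, hγcard⟩, x, ⟨hxπ, hxα⟩, rfl⟩
  · rintro ⟨γ, hγ, x, ⟨hxπ, hxα⟩, rfl⟩
    obtain ⟨hγα, hγcard⟩ := mem_powersetCard.mp hγ
    have hγclique : G.IsNClique d γ := ⟨hα.isClique.subset (by exact_mod_cast hγα), hγcard⟩
    refine ⟨hγclique.insert fun v hv => (hxπ v hv).symm, ?_,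
      Or.inl ⟨γ, hγcard, hγα, subset_insert x γ⟩⟩
    rintro rfl
    exact hxα (mem_insert_self x γ)

lemma neighbourSet_eq_biUnion (hα : G.IsNClique (d + 1) α) :
    neighbourSet G d α = ⋃ γ ∈ powersetCard d α, (insert · γ) '' (piSet G γ \ ↑α) := by
  ext α'
  simp only [mem_neighbourSet_iff hα, Set.mem_iUnion, Set.mem_image, exists_prop]

lemma pairwiseDisjoint_image_insert (S : Finset V → Set V) :
    (powersetCard d α : Set (Finset V)).PairwiseDisjoint fun γ => (insert · γ) '' (S γ \ ↑α) := by
  intro γ₁ hγ₁ γ₂ hγ₂ hne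
  simp only [mem_coe, mem_powersetCard] at hγ₁ hγ₂
  refine Set.disjoint_left.mpr ?_
  rintro _ ⟨x, ⟨-, hxα⟩, rfl⟩ ⟨y, ⟨-, hyα⟩, hxy : insert y γ₂ = insert x γ₁⟩
  have hrecover : ∀ z γ, z ∉ α → γ ⊆ α → insert z γ ∩ α = γ := fun z γ hz hγ => by
    rw [insert_inter_of_notMem hz, inter_eq_left.mpr hγ]
  exact hne (by rw [← hrecover x γ₁ hxα hγ₁.1, ← hrecover y γ₂ hyα hγ₂.1, hxy.symm])

lemma piSet_inter_eq_sdiff (hα : G.IsClique (α : Set V)) (hγα : γ ⊆ α) :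
    piSet G γ ∩ ↑α = ↑(α \ γ) := by
  ext x
  simp only [piSet, Set.mem_inter_iff, Set.mem_ofPred_eq, mem_coe, coe_sdiff, Set.mem_sdiff]
  constructor
  · rintro ⟨hadj, hxα⟩
    exact ⟨hxα, fun hxγ => (hadj x hxγ).ne rfl⟩
  · rintro ⟨hxα, hxγ⟩
    exact ⟨fun v hv => hα (hγα hv) hxα (ne_of_mem_of_not_mem hv hxγ), hxα⟩

lemma ncard_piSet_sdiff_add_one [Finite V] (hα : G.IsNClique (d + 1) α)
    (hγ : γ ∈ powersetCard d α) :
    (piSet G γ \ ↑α).ncard + 1 = (piSet G γ).ncard := by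
  obtain ⟨hγα, hγcard⟩ := mem_powersetCard.mp hγ
  have hsingle : (piSet G γ ∩ ↑α).ncard = 1 := by
    rw [piSet_inter_eq_sdiff hα.isClique hγα, Set.ncard_coe_finset, card_sdiff_of_subset hγα,
      hα.card_eq, hγcard, Nat.add_sub_cancel_left]
  rw [← Set.ncard_inter_add_ncard_sdiff_eq_ncard (piSet G γ) α, hsingle, add_comm]

lemma ncard_neighbourSet [Finite V] (hα : G.IsNClique (d + 1) α) :
    (neighbourSet G d α).ncard = ∑ γ ∈ powersetCard d α, (piSet G γ \ ↑α).ncard := by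
  rw [neighbourSet_eq_biUnion hα, ← set_biUnion_coe,
    (powersetCard d α).finite_toSet.ncard_biUnion (fun _ _ => Set.toFinite _)
      (pairwiseDisjoint_image_insert _), finsum_mem_coe_finset]
  refine sum_congr rfl fun γ hγ => ((insert_inj_on γ).mono fun x hx hxγ => hx.2 ?_).ncard_image
  exact (mem_powersetCard.mp hγ).1 hxγ

end Neighbours

/-- For a `d`-face `α` of the clique complex of `G`, the number of
neighbouring `d`-faces satisfies `|N_α| = Σ_{γ ∈ ∂α} |π_γ| − (d+1)`. -/
theorem neighbourSet_ncard [Fintype V] (G : SimpleGraph V) (d : ℕ) (α : Finset V)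
    (hα : G.IsNClique (d + 1) α) :
    ((neighbourSet G d α).ncard : ℤ) =
      (∑ γ ∈ Finset.powersetCard d α, ((piSet G γ).ncard : ℤ)) - (d + 1) := by
  calc ((neighbourSet G d α).ncard : ℤ)
      = ∑ γ ∈ powersetCard d α, (((piSet G γ).ncard : ℤ) - 1) := by
        rw [ncard_neighbourSet hα, Nat.cast_sum]
        refine sum_congr rfl fun γ hγ => ?_
        rw [← ncard_piSet_sdiff_add_one hα hγ]
        push_cast
        ring
    _ = (∑ γ ∈ powersetCard d α, ((piSet G γ).ncard : ℤ)) - (d + 1) := by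
        rw [sum_sub_distrib, sum_const, card_powersetCard, hα.card_eq, Nat.choose_succ_self_right]
        simp
end

section
/- For any d-face α in the clique complex of a graph G, the Forman–Ricci curvature admits the set-theoretic formula F(α) = (d+2)·|⋂_{γ ∈ ∂α} π_γ| + 2(d+1) − Σ_{γ ∈ ∂α} |π_γ|. -/
variable {V : Type*} [DecidableEq V]

/-!
Every face `α'` of the clique complex containing a face `γ` of codimension one is `γ ∪ {x}`
with `x ∈ π_γ`. Hence the cofaces of `α` correspond to `π_α`, and a parallel neighbour of `α`
through the boundary face `γ` is `γ ∪ {x}` with `x ∈ π_γ`, `x ∉ α` and `x ∉ π_α`; the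
boundary face is recovered as `(γ ∪ {x}) ∩ α`. Since `π_γ` is the disjoint union of these
vertices, of `π_α` and of the single vertex of `α \ γ`, summing over the `d + 1` boundary faces
gives `Σ_γ |π_γ| = |P_α| + (d + 1)(|H_α| + 1)`, and for `d ≥ 1` the intersection of the `π_γ`
is `π_α`.
-/

open Finset

section
variable {G : SimpleGraph V} {d : ℕ} {α γ : Finset V} {x : V}

set_option linter.unusedSectionVars false in
lemma notMem_of_mem_piSet (hx : x ∈ piSet G γ) : x ∉ γ :=
  fun h => G.irrefl (hx x h)

set_option linter.unusedSectionVars false in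
lemma piSet_anti {δ : Finset V} (h : γ ⊆ δ) : piSet G δ ⊆ piSet G γ :=
  fun _ hx v hv => hx v (h hv)

lemma isNClique_insert_iff_mem_piSet {n : ℕ} (hγ : G.IsNClique n γ) :
    G.IsNClique (n + 1) (insert x γ) ↔ x ∈ piSet G γ := by
  refine ⟨fun h v hv => ?_, fun h => hγ.insert fun v hv => (h v hv).symm⟩
  have hxγ : x ∉ γ := fun hxγ => by
    have := h.card_eq
    rw [insert_eq_of_mem hxγ, hγ.card_eq] at this
    omega
  exact h.1 (mem_insert_of_mem hv) (mem_insert_self x γ) (ne_of_mem_of_not_mem hv hxγ)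

lemma cofaceSet_eq_image (hα : G.IsNClique (d + 1) α) :
    cofaceSet G d α = (insert · α) '' piSet G α := by
  ext β
  constructor
  · rintro ⟨hβ, hαβ⟩
    obtain ⟨x, -, rfl⟩ := exists_eq_insert_iff.2 ⟨hαβ, by rw [hα.card_eq, hβ.card_eq]⟩
    exact ⟨x, (isNClique_insert_iff_mem_piSet hα).1 hβ, rfl⟩
  · rintro ⟨x, hx, rfl⟩
    exact ⟨(isNClique_insert_iff_mem_piSet hα).2 hx, subset_insert x α⟩

lemma ncard_cofaceSet (hα : G.IsNClique (d + 1) α) :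
    (cofaceSet G d α).ncard = (piSet G α).ncard := by
  rw [cofaceSet_eq_image hα]
  exact Set.InjOn.ncard_image fun x hx y _ hxy => (insert_inj (notMem_of_mem_piSet hx)).1 hxy

lemma iInter_piSet_powersetCard (hd : 1 ≤ d) (hdα : d ≤ #α) :
    ⋂ γ ∈ α.powersetCard d, piSet G γ = piSet G α := by
  refine subset_antisymm (fun x hx v hv => ?_)
    (Set.subset_iInter₂ fun γ hγ => piSet_anti (mem_powersetCard.1 hγ).1)
  obtain ⟨γ, hvγ, hγα, hγd⟩ :=
    exists_subsuperset_card_eq (singleton_subset_iff.2 hv) (by simpa using hd) hdα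
  exact Set.mem_iInter₂.1 hx γ (mem_powersetCard.2 ⟨hγα, hγd⟩) v (hvγ (mem_singleton_self v))

lemma sharesCoface_insert_iff (hα : G.IsNClique (d + 1) α) (hγα : γ ⊆ α) (hxα : x ∉ α) :
    SharesCoface G d α (insert x γ) ↔ x ∈ piSet G α := by
  constructor
  · rintro ⟨β, hβ, hαβ, hβ'⟩ v hv
    exact hβ.1 (hαβ hv) (hβ' (mem_insert_self x γ)) (ne_of_mem_of_not_mem hv hxα)
  · intro hx
    exact ⟨insert x α, (isNClique_insert_iff_mem_piSet hα).2 hx, subset_insert x α,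
      insert_subset_insert x hγα⟩

lemma parallelSet_eq_biUnion (hα : G.IsNClique (d + 1) α) :
    parallelSet G d α =
      ⋃ γ ∈ α.powersetCard d, (insert · γ) '' (piSet G γ \ (↑α ∪ piSet G α)) := by
  ext α'
  simp only [parallelSet, IsParallelNeighbour, SharesBoundaryFace, Set.mem_ofPred_eq,
    Set.mem_iUnion, Set.mem_image, mem_powersetCard, Set.mem_sdiff, Set.mem_union, mem_coe,
    not_or, exists_prop]
  constructor
  · rintro ⟨hα', hne, ⟨γ, hγd, hγα, hγα'⟩, hnoco⟩
    have hγ : G.IsNClique d γ := ⟨hα.1.subset (coe_subset.2 hγα), hγd⟩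
    obtain ⟨x, -, rfl⟩ := exists_eq_insert_iff.2 ⟨hγα', by rw [hγd, hα'.card_eq]⟩
    have hxα : x ∉ α := fun hxα => hne <| (eq_of_subset_of_card_le (insert_subset hxα hγα)
      (by rw [hα.card_eq, hα'.card_eq])).symm
    exact ⟨γ, ⟨hγα, hγd⟩, x, ⟨(isNClique_insert_iff_mem_piSet hγ).1 hα', hxα,
      fun hx => hnoco ((sharesCoface_insert_iff hα hγα hxα).2 hx)⟩, rfl⟩
  · rintro ⟨γ, ⟨hγα, hγd⟩, x, ⟨hxγ, hxα, hxπα⟩, rfl⟩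
    have hγ : G.IsNClique d γ := ⟨hα.1.subset (coe_subset.2 hγα), hγd⟩
    exact ⟨(isNClique_insert_iff_mem_piSet hγ).2 hxγ,
      fun h => hxα (h ▸ mem_insert_self x γ), ⟨γ, hγd, hγα, subset_insert x γ⟩,
      fun h => hxπα ((sharesCoface_insert_iff hα hγα hxα).1 h)⟩

lemma ncard_parallelSet [Finite V] (hα : G.IsNClique (d + 1) α) :
    (parallelSet G d α).ncard =
      ∑ γ ∈ α.powersetCard d, (piSet G γ \ (↑α ∪ piSet G α)).ncard := by
  rw [parallelSet_eq_biUnion hα, ← finsum_mem_coe_finset, ← set_biUnion_coe,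
    Set.Finite.ncard_biUnion (finite_toSet _) fun _ _ => Set.toFinite _]
  · exact finsum_mem_congr rfl fun γ _ => Set.InjOn.ncard_image fun x hx y _ hxy =>
      (insert_inj (notMem_of_mem_piSet hx.1)).1 hxy
  · intro γ hγ δ hδ hne
    refine Set.disjoint_left.2 ?_
    rintro _ ⟨x, hx, rfl⟩ ⟨y, hy, hxy⟩
    have hγα := (mem_powersetCard.1 hγ).1
    have hδα := (mem_powersetCard.1 hδ).1
    apply hne
    calc γ = insert x γ ∩ α := by rw [insert_inter_of_notMem fun h => hx.2 (Or.inl h),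
            inter_eq_left.2 hγα]
      _ = insert y δ ∩ α := congrArg (· ∩ α) hxy.symm
      _ = δ := by rw [insert_inter_of_notMem fun h => hy.2 (Or.inl h), inter_eq_left.2 hδα]

lemma ncard_piSet_of_mem_powersetCard [Finite V] (hα : G.IsNClique (d + 1) α)
    (hγ : γ ∈ α.powersetCard d) :
    (piSet G γ).ncard = (piSet G γ \ (↑α ∪ piSet G α)).ncard + ((piSet G α).ncard + 1) := by
  obtain ⟨hγα, hγd⟩ := mem_powersetCard.1 hγ
  have hinter : piSet G γ ∩ (↑α ∪ piSet G α) = ↑(α \ γ) ∪ piSet G α := by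
    ext x
    simp only [Set.mem_inter_iff, Set.mem_union, mem_coe, coe_sdiff, Set.mem_sdiff]
    constructor
    · rintro ⟨hx, hxα | hxπ⟩
      exacts [Or.inl ⟨hxα, notMem_of_mem_piSet hx⟩, Or.inr hxπ]
    · rintro (⟨hxα, hxγ⟩ | hxπ)
      · exact ⟨fun v hv => hα.1 (hγα hv) hxα (ne_of_mem_of_not_mem hv hxγ), Or.inl hxα⟩
      · exact ⟨piSet_anti hγα hxπ, Or.inr hxπ⟩
  have hdisj : Disjoint (↑(α \ γ) : Set V) (piSet G α) :=
    Set.disjoint_right.2 fun x hx hxα => notMem_of_mem_piSet hx (mem_sdiff.1 hxα).1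
  have hcard : #(α \ γ) = 1 := by rw [card_sdiff_of_subset hγα, hα.card_eq, hγd]; omega
  rw [← Set.ncard_inter_add_ncard_sdiff_eq_ncard (piSet G γ) (↑α ∪ piSet G α), hinter,
    Set.ncard_union_eq hdisj, Set.ncard_coe_finset, hcard]
  omega

lemma sum_ncard_piSet_powersetCard [Finite V] (hα : G.IsNClique (d + 1) α) :
    ∑ γ ∈ α.powersetCard d, (piSet G γ).ncard =
      (parallelSet G d α).ncard + (d + 1) * ((piSet G α).ncard + 1) := by
  rw [sum_congr rfl fun γ hγ => ncard_piSet_of_mem_powersetCard hα hγ, ncard_parallelSet hα,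
    sum_add_distrib, sum_const, card_powersetCard, hα.card_eq,
    Nat.choose_succ_self_right, smul_eq_mul]

end

/-- For any `d`-face `α` (`d ≥ 1`) of the clique complex of `G`, the
Forman–Ricci curvature `F(α) = |H_α| + (d+1) − |P_α|` admits the set-theoretic
formula `F(α) = (d+2)·|⋂_{γ ∈ ∂α} π_γ| + 2(d+1) − Σ_{γ ∈ ∂α} |π_γ|`. -/
theorem FRC_set_theoretic_formula [Fintype V] (G : SimpleGraph V) (d : ℕ)
    (hd : 1 ≤ d) (α : Finset V) (hα : G.IsNClique (d + 1) α) :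
    ((cofaceSet G d α).ncard : ℤ) + (d + 1) - (parallelSet G d α).ncard =
      (d + 2) *
          ((⋂ γ ∈ (Finset.powersetCard d α : Finset (Finset V)), piSet G γ).ncard : ℤ)
        + 2 * (d + 1)
        - ∑ γ ∈ Finset.powersetCard d α, ((piSet G γ).ncard : ℤ) := by
  rw [iInter_piSet_powersetCard hd (hα.card_eq ▸ d.le_succ), ncard_cofaceSet hα,
    ← Nat.cast_sum, sum_ncard_piSet_powersetCard hα]
  push_cast
  ring
end
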